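/- Fix Gm > 0, τ ≥ 1, s > 0 and 0 < ε₀ < π, and set ζ = 2/(τ²·s²) and E = erf(ε₀/(√2·s)) where erf(x) = (2/√π)·∫₀ˣ exp(−t²) dt. For every g with 0 < g < Gm, the function F(g) = 1 − erf(√ζ·arccos(√(g/Gm)))/E is differentiable at g with derivative F'(g) = √ζ·exp(−ζ·arccos²(√(g/Gm))) / (E·√π·√g·√(Gm − g)). -/

import Mathlib

/-! The chain rule, with `erf' x = (2/√π)·exp(-x²)` by the fundamental theorem of calculus and
`d/dx arccos √(x/c) = -1/(2·√x·√(c-x))` on `0 < x < c`. -/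

open Real

/-- The error function `erf x = (2/√π) ∫₀ˣ exp (-t²) dt`. -/
noncomputable def erf (x : ℝ) : ℝ :=
  2 / Real.sqrt Real.pi * ∫ t in (0:ℝ)..x, Real.exp (-t ^ 2)

theorem erf_hasDerivAt (x : ℝ) : HasDerivAt erf (2 / √π * exp (-x ^ 2)) x := by
  have hc : Continuous fun t : ℝ => exp (-t ^ 2) := by fun_prop
  exact (intervalIntegral.integral_hasDerivAt_right (hc.intervalIntegrable 0 x)
    (hc.stronglyMeasurableAtFilter _ _) hc.continuousAt).const_mul _

theorem hasDerivAt_arccos_sqrt_div {c x : ℝ} (hx : 0 < x) (hxc : x < c) :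
    HasDerivAt (fun y => arccos √(y / c)) (-1 / (2 * √x * √(c - x))) x := by
  have hc : 0 < c := hx.trans hxc
  have hu : 0 < √(x / c) := sqrt_pos.mpr (div_pos hx hc)
  have hu1 : √(x / c) < 1 := (sqrt_lt' one_pos).mpr (by rwa [one_pow, div_lt_one hc])
  have hsqrt : HasDerivAt (fun y => √(y / c)) (1 / (2 * √(x / c)) * (1 / c)) x :=
    (hasDerivAt_sqrt (div_pos hx hc).ne').comp x ((hasDerivAt_id x).div_const c)
  refine ((hasDerivAt_arccos (by linarith) hu1.ne).comp x hsqrt).congr_deriv ?_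
  have h1 : 1 - √(x / c) ^ 2 = (c - x) / c := by
    rw [sq_sqrt (div_pos hx hc).le]; field_simp
  rw [h1, sqrt_div (sub_pos.mpr hxc).le, sqrt_div hx.le]
  have hsub : 0 < √(c - x) := sqrt_pos.mpr (sub_pos.mpr hxc)
  have hsx : 0 < √x := sqrt_pos.mpr hx
  have hsc : 0 < √c := sqrt_pos.mpr hc
  field_simp
  rw [sq_sqrt hc.le]

theorem pdf_truncated_gaussian_deriv_general (Gm τ s ζ E : ℝ)
    (hζ : ζ = 2 / (τ ^ 2 * s ^ 2)) :
    ∀ g : ℝ, 0 < g → g < Gm →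
      HasDerivAt
        (fun x : ℝ => 1 - erf (Real.sqrt ζ * Real.arccos (Real.sqrt (x / Gm))) / E)
        (Real.sqrt ζ * Real.exp (-ζ * Real.arccos (Real.sqrt (g / Gm)) ^ 2) /
          (E * Real.sqrt Real.pi * Real.sqrt g * Real.sqrt (Gm - g))) g := by
  intro g hg hgGm
  have hζ0 : 0 ≤ ζ := by rw [hζ]; positivity
  have hchain := (erf_hasDerivAt _).comp g
    ((hasDerivAt_arccos_sqrt_div hg hgGm).const_mul √ζ) |>.div_const E |>.const_sub 1
  refine hchain.congr_deriv ?_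
  have hexp : -(√ζ * arccos √(g / Gm)) ^ 2 = -ζ * arccos √(g / Gm) ^ 2 := by
    rw [mul_pow, sq_sqrt hζ0]; ring
  rw [hexp]
  ring

theorem pdf_truncated_gaussian_deriv (Gm τ s ε₀ ζ E : ℝ) (hGm : 0 < Gm) (hτ : 1 ≤ τ)
    (hs : 0 < s) (hε₁ : 0 < ε₀) (hε₂ : ε₀ < Real.pi)
    (hζ : ζ = 2 / (τ ^ 2 * s ^ 2)) (hE : E = erf (ε₀ / (Real.sqrt 2 * s))) :
    ∀ g : ℝ, 0 < g → g < Gm →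
      HasDerivAt
        (fun x : ℝ => 1 - erf (Real.sqrt ζ * Real.arccos (Real.sqrt (x / Gm))) / E)
        (Real.sqrt ζ * Real.exp (-ζ * Real.arccos (Real.sqrt (g / Gm)) ^ 2) /
          (E * Real.sqrt Real.pi * Real.sqrt g * Real.sqrt (Gm - g))) g :=
  pdf_truncated_gaussian_deriv_general Gm τ s ζ E hζ
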